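/- If a ∈ ℝᵈ satisfies M·a = 0 and a₁ = 0, then a = 0. In particular the kernel of M intersects W trivially. -/
import Mathlib


/-- Let `M` be the `d×d` skew-symmetric matrix with `M i j = 1` for `i < j` (`d > 2`).
If `M·a = 0` and the first coordinate of `a` vanishes, then `a = 0`; i.e. the kernel of
`M` meets `W = {x : x₀ = 0}` trivially. -/
theorem stmt9 (d : ℕ) (hd : 2 < d)
    (M : Matrix (Fin d) (Fin d) ℝ)
    (hM : ∀ i j : Fin d, M i j = if i < j then 1 else if j < i then -1 else 0)
    (a : Fin d → ℝ)
    (hker : M.mulVec a = 0)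
    (ha1 : a ⟨0, by omega⟩ = 0) :
    a = 0 := by
  have step : ∀ n : ℕ, ∀ h : n + 1 < d, a ⟨n, by omega⟩ + a ⟨n + 1, h⟩ = 0 := by
    intro n h
    have i1 : Fin d := ⟨n, by omega⟩
    have h1 := congrFun hker ⟨n, by omega⟩
    have h2 := congrFun hker ⟨n + 1, h⟩
    simp only [Matrix.mulVec, dotProduct, Pi.zero_apply] at h1 h2
    have key : ∀ j : Fin d,
        (M ⟨n, by omega⟩ j - M ⟨n + 1, h⟩ j) * a j =
        (if j = ⟨n, by omega⟩ then a j else 0) + (if j = ⟨n + 1, h⟩ then a j else 0) := by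
      intro j
      simp only [hM, Fin.lt_def, Fin.ext_iff]
      split_ifs
      all_goals first
      | ring1
      | (exfalso; omega)
    have hsum : (∑ j, (M ⟨n, by omega⟩ j - M ⟨n + 1, h⟩ j) * a j)
        = a ⟨n, by omega⟩ + a ⟨n + 1, h⟩ := by
      simp only [key]
      rw [Finset.sum_add_distrib, Finset.sum_ite_eq' Finset.univ, Finset.sum_ite_eq' Finset.univ]
      simp
    have h0 : (∑ j, (M ⟨n, by omega⟩ j - M ⟨n + 1, h⟩ j) * a j) = 0 := by
      simp only [sub_mul, Finset.sum_sub_distrib, h1, h2, sub_zero]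
    rw [hsum] at h0
    exact h0
  have all : ∀ n : ℕ, ∀ h : n < d, a ⟨n, h⟩ = 0 := by
    intro n
    induction n with
    | zero => intro h; exact ha1
    | succ k ih =>
      intro h
      have hs := step k h
      have hk := ih (by omega)
      linarith
  funext i
  have := all i.val i.isLt
  simpa using this
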